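/- arXiv:2205.04272 — 2 statements merged into one kernel-verified Lean document; each statement's English description precedes it below -/
import Mathlib

section
/- There is a constant C > 0 such that ∫₀^t (t-s)^{-1/2} (1+s)^{-1} ds ≤ C (1+t)^{-1/2} log(2+t) for all t > 0. -/
open Real MeasureTheory

private lemma rint (t a b : ℝ) :
    ∫ s in a..b, (t - s) ^ (-(1/2:ℝ)) = 2 * ((t-a)^((1:ℝ)/2) - (t-b)^((1:ℝ)/2)) := by
  rw [intervalIntegral.integral_comp_sub_left (fun u => u ^ (-(1/2:ℝ))) t,
      integral_rpow (Or.inl (by norm_num))]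
  rw [show (-(1/2:ℝ) + 1) = 1/2 by norm_num]
  ring

private lemma kint (t a b : ℝ) : IntervalIntegrable (fun s => (t - s) ^ (-(1/2:ℝ))) volume a b := by
  have := (intervalIntegral.intervalIntegrable_rpow' (a := t - a) (b := t - b)
    (r := -(1/2)) (by norm_num)).comp_sub_left t
  simpa using this

private lemma fint (t : ℝ) (ht : 0 < t) :
    IntervalIntegrable (fun s => (t - s) ^ (-(1/2:ℝ)) * (1 + s)⁻¹) volume 0 t := by
  apply (kint t 0 t).mono_fun
  · apply Measurable.aestronglyMeasurable
    fun_prop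
  · filter_upwards [MeasureTheory.ae_restrict_mem measurableSet_uIoc] with x hx
    rw [Set.uIoc_of_le ht.le] at hx
    have h1 : (0:ℝ) ≤ (t - x) ^ (-(1/2:ℝ)) := Real.rpow_nonneg (by linarith [hx.2]) _
    have h2 : (1 + x)⁻¹ ≤ 1 := by
      rw [inv_le_one_iff₀]; right; linarith [hx.1]
    have h2' : (0:ℝ) ≤ (1 + x)⁻¹ := by
      have : (0:ℝ) < 1 + x := by linarith [hx.1]
      positivity
    simp only [Real.norm_eq_abs, abs_mul, abs_of_nonneg h1, abs_of_nonneg h2']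
    show (t - x) ^ (-(1/2:ℝ)) * (1 + x)⁻¹ ≤ (t - x) ^ (-(1/2:ℝ))
    calc (t - x) ^ (-(1/2:ℝ)) * (1 + x)⁻¹ ≤ (t - x) ^ (-(1/2:ℝ)) * 1 := by
          exact mul_le_mul_of_nonneg_left h2 h1
      _ = (t - x) ^ (-(1/2:ℝ)) := mul_one _

private lemma logint (a b : ℝ) (ha : 0 ≤ a) (hb : a ≤ b) :
    ∫ s in a..b, (1 + s)⁻¹ = Real.log ((1+b)/(1+a)) := by
  rw [intervalIntegral.integral_comp_add_left (fun u => u⁻¹) 1, integral_inv]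
  rw [Set.uIcc_of_le (by linarith)]
  intro h
  simp only [Set.mem_Icc] at h
  linarith [h.1]

set_option maxHeartbeats 1000000 in
theorem stmt11 :
    ∃ C > 0, ∀ t : ℝ, 0 < t →
      (∫ s in (0:ℝ)..t, (t - s) ^ (-(1/2 : ℝ)) * (1 + s)⁻¹)
        ≤ C * Real.log (2 + t) / Real.sqrt (1 + t) := by
  refine ⟨6, by norm_num, fun t ht => ?_⟩
  set L := Real.log (2 + t) with hL
  have hs : 0 < Real.sqrt (1 + t) := Real.sqrt_pos.2 (by linarith)
  have hss : Real.sqrt (1 + t) * Real.sqrt (1 + t) = 1 + t :=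
    Real.mul_self_sqrt (by linarith)
  have hLpos : 0 < L := Real.log_pos (by linarith)
  rcases le_or_gt t 1 with htle | htgt
  · -- small t : bound by ∫ (t-s)^{-1/2} = 2 √t ≤ 2
    have step1 : (∫ s in (0:ℝ)..t, (t - s) ^ (-(1/2 : ℝ)) * (1 + s)⁻¹)
        ≤ ∫ s in (0:ℝ)..t, (t - s) ^ (-(1/2 : ℝ)) := by
      apply intervalIntegral.integral_mono_on ht.le (fint t ht) (kint t 0 t)
      intro x hx
      have h1 : (0:ℝ) ≤ (t - x) ^ (-(1/2:ℝ)) := Real.rpow_nonneg (by linarith [hx.2]) _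
      have h2 : (1 + x)⁻¹ ≤ 1 := by
        rw [inv_le_one_iff₀]; right; linarith [hx.1]
      calc (t - x) ^ (-(1/2:ℝ)) * (1 + x)⁻¹ ≤ (t - x) ^ (-(1/2:ℝ)) * 1 :=
            mul_le_mul_of_nonneg_left h2 h1
        _ = (t - x) ^ (-(1/2:ℝ)) := mul_one _
    have step2 : (∫ s in (0:ℝ)..t, (t - s) ^ (-(1/2 : ℝ))) ≤ 2 := by
      rw [rint]
      have h0 : ((0:ℝ))^((1:ℝ)/2) = 0 := by
        rw [Real.zero_rpow (by norm_num)]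
      have h1 : (t - 0)^((1:ℝ)/2) ≤ 1 := by
        rw [sub_zero]
        exact Real.rpow_le_one ht.le htle (by norm_num)
      have h2 : ((t - t):ℝ)^((1:ℝ)/2) = 0 := by
        rw [sub_self, Real.zero_rpow (by norm_num)]
      rw [h2]; linarith
    have hsqrt2 : Real.sqrt (1 + t) ≤ 1.5 := by
      have h2 : Real.sqrt (1 + t) ≤ Real.sqrt 2 := Real.sqrt_le_sqrt (by linarith)
      have hsq : Real.sqrt 2 * Real.sqrt 2 = 2 := Real.mul_self_sqrt (by norm_num)
      nlinarith [Real.sqrt_nonneg 2]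
    have hlog2 : (0.69:ℝ) ≤ L := by
      have := Real.log_two_gt_d9
      have h4 : Real.log 2 ≤ L := Real.log_le_log (by norm_num) (by linarith)
      linarith
    have final : (2:ℝ) ≤ 6 * L / Real.sqrt (1 + t) := by
      rw [le_div_iff₀ hs]
      nlinarith
    linarith
  · -- large t : split at t/2
    have h2pos : (0:ℝ) < t / 2 := by linarith
    have hsplit : (∫ s in (0:ℝ)..t, (t - s) ^ (-(1/2 : ℝ)) * (1 + s)⁻¹)
        = (∫ s in (0:ℝ)..(t/2), (t - s) ^ (-(1/2 : ℝ)) * (1 + s)⁻¹)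
          + ∫ s in (t/2)..t, (t - s) ^ (-(1/2 : ℝ)) * (1 + s)⁻¹ := by
      rw [intervalIntegral.integral_add_adjacent_intervals]
      · exact (fint t ht).mono_set (by
          rw [Set.uIcc_of_le (by linarith), Set.uIcc_of_le ht.le]
          exact Set.Icc_subset_Icc le_rfl (by linarith))
      · exact (fint t ht).mono_set (by
          rw [Set.uIcc_of_le (by linarith), Set.uIcc_of_le ht.le]
          exact Set.Icc_subset_Icc (by linarith) le_rfl)
    -- Part A
    have intA' : IntervalIntegrable (fun s => (t/2) ^ (-(1/2:ℝ)) * (1 + s)⁻¹) volume 0 (t/2) := by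
      apply ContinuousOn.intervalIntegrable
      apply ContinuousOn.mul continuousOn_const
      apply ContinuousOn.inv₀ (by fun_prop)
      intro x hx
      rw [Set.uIcc_of_le (by linarith)] at hx
      have := hx.1
      intro h; linarith
    have hA : (∫ s in (0:ℝ)..(t/2), (t - s) ^ (-(1/2 : ℝ)) * (1 + s)⁻¹)
        ≤ (t/2) ^ (-(1/2:ℝ)) * Real.log (1 + t/2) := by
      have mono : (∫ s in (0:ℝ)..(t/2), (t - s) ^ (-(1/2 : ℝ)) * (1 + s)⁻¹)
          ≤ ∫ s in (0:ℝ)..(t/2), (t/2) ^ (-(1/2:ℝ)) * (1 + s)⁻¹ := by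
        apply intervalIntegral.integral_mono_on (by linarith)
          ((fint t ht).mono_set (by
            rw [Set.uIcc_of_le (by linarith), Set.uIcc_of_le ht.le]
            exact Set.Icc_subset_Icc le_rfl (by linarith))) intA'
        intro x hx
        have hb : (t - x) ^ (-(1/2:ℝ)) ≤ (t/2) ^ (-(1/2:ℝ)) :=
          Real.rpow_le_rpow_of_nonpos h2pos (by linarith [hx.2]) (by norm_num)
        have hinv : (0:ℝ) ≤ (1 + x)⁻¹ := by
          have : (0:ℝ) < 1 + x := by linarith [hx.1]
          positivity
        exact mul_le_mul_of_nonneg_right hb hinv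
      calc _ ≤ _ := mono
        _ = (t/2) ^ (-(1/2:ℝ)) * ∫ s in (0:ℝ)..(t/2), (1 + s)⁻¹ := by
            rw [← intervalIntegral.integral_const_mul]
        _ = (t/2) ^ (-(1/2:ℝ)) * Real.log (1 + t/2) := by
            rw [logint 0 (t/2) le_rfl (by linarith)]
            norm_num
    -- Part B
    have hB : (∫ s in (t/2)..t, (t - s) ^ (-(1/2 : ℝ)) * (1 + s)⁻¹)
        ≤ (1 + t/2)⁻¹ * (2 * (t/2) ^ ((1:ℝ)/2)) := by
      have mono : (∫ s in (t/2)..t, (t - s) ^ (-(1/2 : ℝ)) * (1 + s)⁻¹)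
          ≤ ∫ s in (t/2)..t, (t - s) ^ (-(1/2:ℝ)) * (1 + t/2)⁻¹ := by
        apply intervalIntegral.integral_mono_on (by linarith)
          ((fint t ht).mono_set (by
            rw [Set.uIcc_of_le (by linarith), Set.uIcc_of_le ht.le]
            exact Set.Icc_subset_Icc (by linarith) le_rfl))
          ((kint t (t/2) t).mul_const _)
        intro x hx
        have h1 : (0:ℝ) ≤ (t - x) ^ (-(1/2:ℝ)) := Real.rpow_nonneg (by linarith [hx.2]) _
        have h2 : (1 + x)⁻¹ ≤ (1 + t/2)⁻¹ := by
          apply inv_anti₀ (by linarith)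
          linarith [hx.1]
        exact mul_le_mul_of_nonneg_left h2 h1
      calc _ ≤ _ := mono
        _ = (∫ s in (t/2)..t, (t - s) ^ (-(1/2:ℝ))) * (1 + t/2)⁻¹ := by
            rw [← intervalIntegral.integral_mul_const]
        _ = (1 + t/2)⁻¹ * (2 * (t/2) ^ ((1:ℝ)/2)) := by
            rw [rint]
            rw [sub_self, Real.zero_rpow (by norm_num)]
            have : t - t/2 = t/2 := by ring
            rw [this]; ring
    -- algebra
    set s := Real.sqrt (1 + t) with hsdef
    set u := Real.sqrt (t/2) with hudef
    have hu : 0 < u := Real.sqrt_pos.2 h2pos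
    have huu : u * u = t/2 := Real.mul_self_sqrt h2pos.le
    have hs2u : s ≤ 2 * u := by
      have : Real.sqrt (1 + t) ≤ Real.sqrt (4 * (t/2)) := Real.sqrt_le_sqrt (by linarith)
      calc s ≤ Real.sqrt (4 * (t/2)) := this
        _ = 2 * u := by
          rw [show (4:ℝ) * (t/2) = 2^2 * (t/2) by ring, Real.sqrt_mul (by positivity),
            Real.sqrt_sq (by norm_num)]
    have hus : u ≤ s := Real.sqrt_le_sqrt (by linarith)
    have hrpow_pos : (t/2) ^ (-(1/2:ℝ)) = u⁻¹ := by
      rw [Real.rpow_neg h2pos.le, ← Real.sqrt_eq_rpow]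
    have hrpow_half : (t/2) ^ ((1:ℝ)/2) = u := by
      rw [← Real.sqrt_eq_rpow]
    have hlogA : Real.log (1 + t/2) ≤ L := Real.log_le_log (by linarith) (by linarith)
    have hlogA0 : 0 ≤ Real.log (1 + t/2) := Real.log_nonneg (by linarith)
    have hL1 : 1 ≤ L := by
      rw [hL, Real.le_log_iff_exp_le (by linarith)]
      have := Real.exp_one_lt_d9
      linarith
    have hT1 : (t/2) ^ (-(1/2:ℝ)) * Real.log (1 + t/2) ≤ 2 * L / s := by
      rw [hrpow_pos, le_div_iff₀ hs]
      have h1 : u⁻¹ * s ≤ 2 := by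
        rw [inv_mul_le_iff₀ hu]
        linarith
      have h2 : u⁻¹ * Real.log (1 + t/2) * s = (u⁻¹ * s) * Real.log (1 + t/2) := by ring
      rw [h2]
      nlinarith [mul_le_mul h1 hlogA hlogA0 (by norm_num : (0:ℝ) ≤ 2)]
    have hT2 : (1 + t/2)⁻¹ * (2 * (t/2) ^ ((1:ℝ)/2)) ≤ 4 * L / s := by
      rw [hrpow_half, le_div_iff₀ hs]
      have hv : (0:ℝ) < 1 + t/2 := by linarith
      have hvinv : (1 + t/2) * (1 + t/2)⁻¹ = 1 := mul_inv_cancel₀ (by positivity)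
      have key : (1 + t/2)⁻¹ * (2 * u) * s ≤ 4 := by
        have hus' : u * s ≤ s * s := mul_le_mul_of_nonneg_right hus hs.le
        have h3 : (1 + t/2)⁻¹ * (2 * u) * s = 2 * (u * s) * (1 + t/2)⁻¹ := by ring
        rw [hss] at hus'
        rw [h3]
        have h4 : u * s ≤ 1 + t := hus'
        have hinvpos : (0:ℝ) < (1 + t/2)⁻¹ := by positivity
        have h5 : 2 * (u * s) * (1 + t/2)⁻¹ ≤ 2 * (1 + t) * (1 + t/2)⁻¹ := by
          apply mul_le_mul_of_nonneg_right _ hinvpos.le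
          linarith
        have h6 : 2 * (1 + t) * (1 + t/2)⁻¹ ≤ 4 := by
          rw [show (4:ℝ) = 2 * (2 + t) * (1 + t/2)⁻¹ by
            field_simp; ring]
          apply mul_le_mul_of_nonneg_right _ hinvpos.le
          linarith
        linarith
      linarith
    rw [hsplit]
    have : 2 * L / s + 4 * L / s = 6 * L / s := by ring
    linarith [add_le_add (le_trans hA hT1) (le_trans hB hT2)]
end

section
/- Let γ : ℝ → ℝ be C² and bounded with ‖γ'‖_∞ ≤ 1/2, ψ(x) = x - γ(x). Then sup_x |ψ^{-1}(x) - x - γ(x)(1 + γ'(x))| ≤ (‖γ'‖_∞² + (1/2)‖γ''‖_∞ ‖γ‖_∞) ‖γ‖_∞. -/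
/-!
Since `γ` is bounded and continuous, `ψ = id - γ` is onto, so `y = ψ⁻¹ x` satisfies `y - x = γ y`
and `|y - x| ≤ ‖γ‖_∞`. Substituting `y - x = γ y` gives
`y - x - γ x (1 + γ' x) = (γ y - γ x - γ' x (y - x)) + γ' x (γ y - γ x)`;
the first term is a Taylor remainder, at most `‖γ''‖_∞ ‖γ‖_∞² / 2`, and the second is at most
`‖γ'‖_∞² ‖γ‖_∞` by the mean value theorem.
-/

open Set

theorem abs_sub_sub_deriv_mul_le {f : ℝ → ℝ} (hf : ContDiff ℝ 2 f) {C : ℝ}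
    (hC : ∀ z, |deriv (deriv f) z| ≤ C) (a b : ℝ) :
    |f b - f a - deriv f a * (b - a)| ≤ C / 2 * (b - a) ^ 2 := by
  rcases eq_or_ne a b with rfl | hab
  · simp
  obtain ⟨c, -, hc⟩ := taylor_mean_remainder_lagrange_iteratedDeriv (n := 1) hab hf.contDiffOn
  have hderiv : derivWithin f (uIcc a b) a = deriv f a :=
    ((hf.differentiable two_ne_zero) a).derivWithin (uniqueDiffOn_uIcc hab a left_mem_uIcc)
  have htaylor : taylorWithinEval f 1 (uIcc a b) a b = f a + deriv f a * (b - a) := by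
    simp only [taylorWithinEval_succ, taylor_within_zero_eval, CharP.cast_eq_zero, zero_add,
      Nat.factorial_zero, Nat.cast_one, mul_one, inv_one, pow_one, one_mul,
      iteratedDerivWithin_one, hderiv, smul_eq_mul, add_right_inj]
    ring
  rw [sub_sub, ← htaylor, hc, iteratedDeriv_succ, iteratedDeriv_one, abs_div, abs_mul,
    abs_of_nonneg (sq_nonneg (b - a))]
  norm_num
  linarith [mul_le_mul_of_nonneg_right (hC c) (sq_nonneg (b - a))]

theorem surjective_id_sub_of_abs_le {γ : ℝ → ℝ} (hγ : Continuous γ) {M : ℝ}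
    (hM : ∀ x, |γ x| ≤ M) : Function.Surjective fun x => x - γ x := by
  intro x
  have hlow := abs_le.mp (hM (x - M))
  have hhigh := abs_le.mp (hM (x + M))
  have hx : x ∈ Icc (x - M - γ (x - M)) (x + M - γ (x + M)) := ⟨by linarith, by linarith⟩
  obtain ⟨y, -, hy⟩ := intermediate_value_Icc (by linarith : x - M ≤ x + M)
    (show Continuous fun x => x - γ x by fun_prop).continuousOn hx
  exact ⟨y, hy⟩

theorem abs_sub_sub_mul_one_add_deriv_le {γ : ℝ → ℝ} (hγ : ContDiff ℝ 2 γ) {M0 M1 M2 : ℝ}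
    (hb0 : ∀ x, |γ x| ≤ M0) (hb1 : ∀ x, |deriv γ x| ≤ M1)
    (hb2 : ∀ x, |deriv (deriv γ) x| ≤ M2) {x y : ℝ} (hy : y - γ y = x) :
    |y - x - γ x * (1 + deriv γ x)| ≤ (M1 ^ 2 + (1 / 2) * M2 * M0) * M0 := by
  have hyx : y - x = γ y := by linarith
  have hdist : |y - x| ≤ M0 := hyx ▸ hb0 y
  have hM1 : 0 ≤ M1 := (abs_nonneg _).trans (hb1 x)
  have hLip : |γ y - γ x| ≤ M1 * M0 := by
    have := Convex.norm_image_sub_le_of_norm_deriv_le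
      (fun z _ => (hγ.differentiable two_ne_zero) z) (fun z _ => hb1 z) convex_univ
      (mem_univ x) (mem_univ y)
    simp only [Real.norm_eq_abs] at this
    exact this.trans (mul_le_mul_of_nonneg_left hdist hM1)
  have hTaylor : |γ y - γ x - deriv γ x * (y - x)| ≤ M2 / 2 * M0 ^ 2 := by
    refine (abs_sub_sub_deriv_mul_le hγ hb2 x y).trans ?_
    have hM2 : 0 ≤ M2 := (abs_nonneg _).trans (hb2 x)
    have hsq : (y - x) ^ 2 ≤ M0 ^ 2 := by rw [← sq_abs]; gcongr
    gcongr
  calc |y - x - γ x * (1 + deriv γ x)|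
      = |(γ y - γ x - deriv γ x * (y - x)) + deriv γ x * (γ y - γ x)| := by
        rw [hyx]; ring_nf
    _ ≤ |γ y - γ x - deriv γ x * (y - x)| + |deriv γ x| * |γ y - γ x| :=
        (abs_add_le _ _).trans_eq (by rw [abs_mul])
    _ ≤ M2 / 2 * M0 ^ 2 + M1 * (M1 * M0) := by gcongr; exact hb1 x
    _ = (M1 ^ 2 + (1 / 2) * M2 * M0) * M0 := by ring

theorem stmt15_general (γ : ℝ → ℝ) (hγ : ContDiff ℝ 2 γ)
    (M0 M1 M2 : ℝ) (hb0 : ∀ x, |γ x| ≤ M0) (hb1 : ∀ x, |deriv γ x| ≤ M1)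
    (hb2 : ∀ x, |deriv (deriv γ) x| ≤ M2) :
    ∀ x : ℝ,
      |Function.invFun (fun x : ℝ => x - γ x) x - x - γ x * (1 + deriv γ x)|
        ≤ (M1^2 + (1/2) * M2 * M0) * M0 := fun x =>
  abs_sub_sub_mul_one_add_deriv_le hγ hb0 hb1 hb2
    (Function.invFun_eq (surjective_id_sub_of_abs_le hγ.continuous hb0 x))

theorem stmt15 (γ : ℝ → ℝ) (hγ : ContDiff ℝ 2 γ) (hd : ∀ x, |deriv γ x| ≤ 1/2)
    (M0 M1 M2 : ℝ) (hb0 : ∀ x, |γ x| ≤ M0) (hb1 : ∀ x, |deriv γ x| ≤ M1)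
    (hb2 : ∀ x, |deriv (deriv γ) x| ≤ M2) :
    ∀ x : ℝ,
      |Function.invFun (fun x : ℝ => x - γ x) x - x - γ x * (1 + deriv γ x)|
        ≤ (M1^2 + (1/2) * M2 * M0) * M0 :=
  stmt15_general γ hγ M0 M1 M2 hb0 hb1 hb2
end
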